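/- arXiv:2412.11257 — 2 statements merged into one kernel-verified Lean document; each statement's English description precedes it below -/
import Mathlib

section
/- Let σ_f, σ_g, σ_{fg}, c_f, c_g, n₀ be strictly positive real numbers. Set N := n₀·(σ_g/σ_{fg})·√(c_f/c_g) and B := n₀·c_f + N·c_g. Then (σ_{fg}²/n₀ + σ_g²/N) / (σ_f² / (B/c_f)) = (σ_{fg}²/σ_f²)·(1 + (σ_g/σ_{fg})·√(c_g/c_f)) + (σ_g²/σ_f²)·((σ_{fg}/σ_g)·√(c_g/c_f) + c_g/c_f). -/
/-- **Variance ratio of PEMC versus standard Monte Carlo under optimal allocation.**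
With `σf² = Var(f(Y))`, `σfg² = Var(f(Y) − g(X))`, `σg² = Var(g(X̃))`, per-sample costs
`cf, cg`, `n₀` expensive samples, `N = n₀ (σg/σfg) √(cf/cg)` cheap samples and budget
`B = n₀ cf + N cg`, the ratio of the PEMC variance `σfg²/n₀ + σg²/N` to the standard
Monte-Carlo variance `σf²/(B/cf)` equals
`(σfg²/σf²)(1 + (σg/σfg)√(cg/cf)) + (σg²/σf²)((σfg/σg)√(cg/cf) + cg/cf)`. -/
theorem pemc_variance_ratio (σf σg σfg cf cg n₀ : ℝ)
    (hσf : 0 < σf) (hσg : 0 < σg) (hσfg : 0 < σfg)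
    (hcf : 0 < cf) (hcg : 0 < cg) (hn₀ : 0 < n₀) :
    (σfg ^ 2 / n₀ + σg ^ 2 / (n₀ * (σg / σfg) * Real.sqrt (cf / cg)))
        / (σf ^ 2 / ((n₀ * cf + n₀ * (σg / σfg) * Real.sqrt (cf / cg) * cg) / cf))
      = (σfg ^ 2 / σf ^ 2) * (1 + (σg / σfg) * Real.sqrt (cg / cf))
        + (σg ^ 2 / σf ^ 2) * ((σfg / σg) * Real.sqrt (cg / cf) + cg / cf) := by
  have hs : 0 < Real.sqrt (cg / cf) := Real.sqrt_pos.2 (div_pos hcg hcf)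
  have hinv : Real.sqrt (cf / cg) = (Real.sqrt (cg / cf))⁻¹ := by
    rw [← Real.sqrt_inv, inv_div]
  have hsq : Real.sqrt (cg / cf) ^ 2 = cg / cf := Real.sq_sqrt (div_pos hcg hcf).le
  set s := Real.sqrt (cg / cf) with hs'
  have hcg' : cg = s ^ 2 * cf := by rw [hsq]; field_simp
  rw [hinv, hcg']
  field_simp
end

section
/- Let (Ω, 𝓕, ℙ) be a probability space, let 𝓖 ⊆ 𝓕 be a sub-σ-algebra, let F be a square-integrable real random variable with G₀ := E[F | 𝓖], and let G be a 𝓖-measurable square-integrable real random variable with E[G²] ≤ K for some real K ≥ 0. Then |Var(F) − Var(G) − Var(F − G)| ≤ 2·√(E[(G₀ − G)²])·√K. -/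
/-!
Writing `F = G + (F - G)` gives `Var F - Var G - Var (F - G) = 2 cov(G, F - G)`. Since `G` is
`m`-measurable, the pull-out property lets `F` be replaced by `G₀ = E[F | m]` in this covariance,
so the defect is `2 cov(G, G₀ - G)`, which Cauchy–Schwarz bounds by
`2 √(Var G) √(Var (G₀ - G)) ≤ 2 √K √(E[(G₀ - G)²])`.
-/

open MeasureTheory ProbabilityTheory

namespace ProbabilityTheory

variable {Ω : Type*} {mΩ : MeasurableSpace Ω} {μ : Measure Ω} {X Y : Ω → ℝ}

lemma sq_covariance_le_variance_mul_variance [IsFiniteMeasure μ] (hX : MemLp X 2 μ)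
    (hY : MemLp Y 2 μ) : cov[X, Y; μ] ^ 2 ≤ Var[X; μ] * Var[Y; μ] := by
  -- `t ↦ Var[t • X + Y]` is a nonnegative quadratic, so its discriminant is nonpositive.
  have hquad : ∀ t : ℝ, 0 ≤ Var[X; μ] * (t * t) + 2 * cov[X, Y; μ] * t + Var[Y; μ] := by
    intro t
    have h := variance_add (hX.const_smul t) hY
    rw [variance_smul, covariance_smul_left] at h
    nlinarith [variance_nonneg (t • X + Y) μ]
  have := discrim_le_zero hquad
  rw [discrim] at this
  nlinarith

lemma abs_covariance_le_sqrt_variance_mul_sqrt_variance [IsFiniteMeasure μ] (hX : MemLp X 2 μ)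
    (hY : MemLp Y 2 μ) : |cov[X, Y; μ]| ≤ √Var[X; μ] * √Var[Y; μ] := by
  rw [← Real.sqrt_mul (variance_nonneg X μ)]
  exact Real.abs_le_sqrt (sq_covariance_le_variance_mul_variance hX hY)

lemma integral_mul_condExp_of_stronglyMeasurable {m : MeasurableSpace Ω} (hm : m ≤ mΩ)
    [SigmaFinite (μ.trim hm)] (hX : StronglyMeasurable[m] X) (hXY : Integrable (X * Y) μ)
    (hY : Integrable Y μ) : μ[X * μ[Y | m]] = μ[X * Y] := by
  rw [← integral_condExp hm (f := X * Y)]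
  exact integral_congr_ae (condExp_mul_of_stronglyMeasurable_left hX hXY hY).symm

lemma covariance_condExp_right_of_stronglyMeasurable [IsProbabilityMeasure μ]
    {m : MeasurableSpace Ω} (hm : m ≤ mΩ) (hX : StronglyMeasurable[m] X) (hX2 : MemLp X 2 μ)
    (hY : MemLp Y 2 μ) : cov[X, μ[Y | m]; μ] = cov[X, Y; μ] := by
  rw [covariance_eq_sub hX2 (hY.condExp one_le_two), covariance_eq_sub hX2 hY,
    integral_mul_condExp_of_stronglyMeasurable hm hX (hX2.integrable_mul hY)
      (hY.integrable one_le_two), integral_condExp hm]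

end ProbabilityTheory

theorem variance_decomposition_perturbation_general
    {Ω : Type*} {mΩ : MeasurableSpace Ω} {P : Measure Ω} [IsProbabilityMeasure P]
    (m : MeasurableSpace Ω) (hm : m ≤ mΩ)
    (F G : Ω → ℝ) (hF : MemLp F 2 P) (hG : MemLp G 2 P)
    (hGmeas : StronglyMeasurable[m] G)
    (K : ℝ) (hK : ∫ ω, G ω ^ 2 ∂P ≤ K) :
    |variance F P - variance G P - variance (fun ω => F ω - G ω) P|
      ≤ 2 * Real.sqrt (∫ ω, ((P[F|m]) ω - G ω) ^ 2 ∂P) * Real.sqrt K := by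
  set G₀ := P[F|m]
  have hG₀ : MemLp G₀ 2 P := hF.condExp one_le_two
  have hdefect : variance F P - variance G P - variance (fun ω => F ω - G ω) P
      = 2 * cov[G, G₀ - G; P] := by
    have hsplit := variance_add hG (hF.sub hG)
    rw [add_sub_cancel] at hsplit
    change Var[F; P] - Var[G; P] - Var[F - G; P] = _
    rw [hsplit, covariance_sub_right hG hG₀ hG,
      covariance_condExp_right_of_stronglyMeasurable hm hGmeas hG hF,
      ← covariance_sub_right hG hF hG]
    ring
  have hVarG : Var[G; P] ≤ K := (variance_le_expectation_sq hG.1).trans hK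
  have hVarG₀G : Var[G₀ - G; P] ≤ ∫ ω, (G₀ ω - G ω) ^ 2 ∂P :=
    variance_le_expectation_sq (hG₀.sub hG).1
  calc |variance F P - variance G P - variance (fun ω => F ω - G ω) P|
      = 2 * |cov[G, G₀ - G; P]| := by rw [hdefect, abs_mul, abs_two]
    _ ≤ 2 * (√Var[G; P] * √Var[G₀ - G; P]) := by
        gcongr; exact abs_covariance_le_sqrt_variance_mul_sqrt_variance hG (hG₀.sub hG)
    _ ≤ 2 * (Real.sqrt K * Real.sqrt (∫ ω, (G₀ ω - G ω) ^ 2 ∂P)) := by gcongr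
    _ = 2 * Real.sqrt (∫ ω, (G₀ ω - G ω) ^ 2 ∂P) * Real.sqrt K := by ring

/-- **Perturbation of the Pythagorean variance decomposition.**
Let `F` be square-integrable with ideal prediction `G₀ = E[F | m]`, and let `G` be an
`m`-measurable square-integrable prediction model with second moment bounded by `K`. Then
`|Var(F) − Var(G) − Var(F − G)| ≤ 2 √(E[(G₀ − G)²]) √K`, where `E[(G₀ − G)²]` is the total
`L²` training error. -/
theorem variance_decomposition_perturbation
    {Ω : Type*} {mΩ : MeasurableSpace Ω} {P : Measure Ω} [IsProbabilityMeasure P]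
    (m : MeasurableSpace Ω) (hm : m ≤ mΩ)
    (F G : Ω → ℝ) (hF : MemLp F 2 P) (hG : MemLp G 2 P)
    (hGmeas : StronglyMeasurable[m] G)
    (K : ℝ) (hK0 : 0 ≤ K) (hK : ∫ ω, G ω ^ 2 ∂P ≤ K) :
    |variance F P - variance G P - variance (fun ω => F ω - G ω) P|
      ≤ 2 * Real.sqrt (∫ ω, ((P[F|m]) ω - G ω) ^ 2 ∂P) * Real.sqrt K :=
  variance_decomposition_perturbation_general m hm F G hF hG hGmeas K hK
end
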